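/- arXiv:2602.15164 — 2 statements merged into one kernel-verified Lean document; each statement's English description precedes it below -/
import Mathlib

section
/- For queries in the grammar Q ::= φ_{??i} | φ | Q ∧ Q | Q ; Q with quantitative semantics ⟨Q⟩_{v,u}(z) defined by: ⟨φ_{??i}⟩_{v,u}(z) = (ι_φ(z) - v_i)/u_i; ⟨φ⟩_{v,u}(z) = +∞ if sat_φ(z) = 1 and -∞ otherwise; ⟨Q1 ∧ Q2⟩_{v,u}(z) = min(⟨Q1⟩_{v,u}(z), ⟨Q2⟩_{v,u}(z)); and ⟨Q1 ; Q2⟩_{v,u}(z) = max over 0 ≤ k ≤ n of min(⟨Q1⟩_{v,u}(z_{0:k}), ⟨Q2⟩_{v,u}(z_{k:n})) — the value t* = ⟨Q⟩_{v,u}(z) is a boundary value of the antitone function t ↦ ⟦Q_{t·u + v}⟧(z), i.e., ⟦Q_{t'·u+v}⟧(z) = 0 for all t' > t*, and either t* = -∞ or ⟦Q_{t*·u+v}⟧(z) = 1. -/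
/-- Queries: parameterized predicates, parameterless predicates, conjunction, sequencing. -/
inductive Query (X : Type) (d : ℕ) where
  | pred (i : Fin d) (ι : List X → ℝ)
  | pred0 (sat : List X → Bool)
  | and (q1 q2 : Query X d)
  | seq (q1 q2 : Query X d)

/-- Satisfaction semantics `⟦Q_θ⟧(z)`. -/
noncomputable def Query.sem {X : Type} {d : ℕ} : Query X d → (Fin d → ℝ) → List X → Bool
  | .pred i ι, θ, z => decide (θ i ≤ ι z)
  | .pred0 s, _, z => s z
  | .and q1 q2, θ, z => q1.sem θ z && q2.sem θ z
  | .seq q1 q2, θ, z =>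
      (List.range (z.length + 1)).any fun k => q1.sem θ (z.take k) && q2.sem θ (z.drop k)

/-- Quantitative semantics `⟨Q⟩_{v,u}(z) ∈ ℝ̄`. -/
noncomputable def Query.quant {X : Type} {d : ℕ} :
    Query X d → (Fin d → ℝ) → (Fin d → ℝ) → List X → EReal
  | .pred i ι, v, u, z => (((ι z - v i) / u i : ℝ) : EReal)
  | .pred0 s, _, _, z => if s z then ⊤ else ⊥
  | .and q1 q2, v, u, z => min (q1.quant v u z) (q2.quant v u z)
  | .seq q1 q2, v, u, z =>
      (Finset.range (z.length + 1)).sup fun k =>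
        min (q1.quant v u (z.take k)) (q2.quant v u (z.drop k))

/-!
The quantitative value is exactly the upper set of satisfying parameters: for every real `t`,
`t ≤ ⟨Q⟩_{v,u}(z)` iff `⟦Q_{t·u+v}⟧(z)` holds. For a parameterized predicate this is
`t ≤ (ι z - v i) / u i ↔ t * u i + v i ≤ ι z`, which needs `u i > 0`; the remaining cases follow
by structural induction, since `t ≤ ·` turns `min` and a finite `sup` in `EReal` into `∧` and `∃`.
-/

namespace Query

variable {X : Type} {d : ℕ}

theorem coe_le_quant_iff_sem (Q : Query X d) (v u : Fin d → ℝ) (hu : ∀ i, 0 < u i)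
    (z : List X) (t : ℝ) :
    (t : EReal) ≤ Q.quant v u z ↔ Q.sem (fun i => t * u i + v i) z = true := by
  induction Q generalizing z with
  | pred i ι =>
    rw [quant, sem, EReal.coe_le_coe_iff, le_div_iff₀ (hu i), decide_eq_true_iff,
      le_sub_iff_add_le]
  | pred0 s =>
    by_cases hs : s z <;> simp [quant, sem, hs]
  | and q1 q2 ih1 ih2 =>
    rw [quant, sem, le_min_iff, Bool.and_eq_true, ih1, ih2]
  | seq q1 q2 ih1 ih2 =>
    simp only [quant, sem, Finset.le_sup_iff (EReal.bot_lt_coe t), le_min_iff, ih1, ih2,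
      Finset.mem_range, List.any_eq_true, List.mem_range, Bool.and_eq_true]

end Query

/-- The quantitative semantics computes a boundary value of `t ↦ ⟦Q_{t·u+v}⟧(z)`. -/
theorem quant_is_boundary {X : Type} {d : ℕ} (Q : Query X d)
    (v u : Fin d → ℝ) (hu : ∀ i, 0 < u i) (z : List X) :
    (∀ t' : ℝ, Q.quant v u z < (t' : EReal) →
        Q.sem (fun i => t' * u i + v i) z = false) ∧
    (Q.quant v u z = ⊥ ∨
      ∀ t : ℝ, (t : EReal) ≤ Q.quant v u z → Q.sem (fun i => t * u i + v i) z = true) := by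
  refine ⟨fun t' hlt => ?_, Or.inr fun t hle => (Q.coe_le_quant_iff_sem v u hu z t).mp hle⟩
  rw [← Bool.not_eq_true, ← Q.coe_le_quant_iff_sem v u hu z t', not_le]
  exact hlt
end

section
/- For any query Q, parameter v ∈ ℝ^d, positive vector u ∈ ℝ_{>0}^d, trajectory z of length n, and indices 0 ≤ i ≤ j ≤ n, the (i,j) entry of the matrix semantics equals the quantitative semantics on the corresponding subtrajectory: (⟪Q⟫_{v,u}(z))_{i,j} = ⟨Q⟩_{v,u}(z_{i:j}). In particular ⟨Q⟩_{v,u}(z) = (⟪Q⟫_{v,u}(z))_{0,n}. -/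
/-- Matrix semantics `⟪Q⟫_{v,u}(z)`, an `(n+1)×(n+1)` matrix over ℝ̄. -/
noncomputable def Query.matSem {X : Type} {d : ℕ} :
    Query X d → (Fin d → ℝ) → (Fin d → ℝ) → (z : List X) →
      Fin (z.length + 1) → Fin (z.length + 1) → EReal
  | .pred i ι, v, u, z => fun a b =>
      if (a : ℕ) ≤ b then (((ι ((z.drop a).take ((b : ℕ) - a)) - v i) / u i : ℝ) : EReal)
      else ⊥
  | .pred0 s, _, _, z => fun a b =>
      if (a : ℕ) ≤ b then (if s ((z.drop a).take ((b : ℕ) - a)) then ⊤ else ⊥) else ⊥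
  | .and q1 q2, v, u, z => fun a b => min (q1.matSem v u z a b) (q2.matSem v u z a b)
  | .seq q1 q2, v, u, z => fun a b =>
      Finset.univ.sup fun k => min (q1.matSem v u z a k) (q2.matSem v u z k b)

/-! Sequencing is a max-min matrix product; since every matrix semantics is upper triangular,
the only split points contributing to entry `(i, j)` are `i ≤ k ≤ j`, and these are exactly the
split points of the subtrajectory `z_{i:j}`. Induction on the query then identifies the two
semantics entrywise. -/

theorem List.take_take_drop_sub {α : Type*} (l : List α) {a k b : ℕ} (hkb : k ≤ b) :
    ((l.drop a).take (b - a)).take (k - a) = (l.drop a).take (k - a) := by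
  rw [List.take_take, Nat.min_eq_left (Nat.sub_le_sub_right hkb a)]

theorem List.drop_take_drop_sub {α : Type*} (l : List α) {a k b : ℕ} (hak : a ≤ k) :
    ((l.drop a).take (b - a)).drop (k - a) = (l.drop k).take (b - k) := by
  rw [List.drop_take, List.drop_drop, Nat.add_sub_cancel' hak, Nat.sub_sub_sub_cancel_right hak]

theorem Fin.sup_univ_eq_sup_range_of_eq_bot {α : Type*} [SemilatticeSup α] [OrderBot α]
    {n a b : ℕ} (hab : a ≤ b) (hbn : b ≤ n) (f : Fin (n + 1) → α) (g : ℕ → α)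
    (hfg : ∀ k : Fin (n + 1), a ≤ k → (k : ℕ) ≤ b → f k = g (k - a))
    (hf : ∀ k : Fin (n + 1), (k : ℕ) < a ∨ b < k → f k = ⊥) :
    Finset.univ.sup f = (Finset.range (b - a + 1)).sup g := by
  apply le_antisymm
  · refine Finset.sup_le fun k _ => ?_
    by_cases hk : a ≤ (k : ℕ) ∧ (k : ℕ) ≤ b
    · rw [hfg k hk.1 hk.2]
      exact Finset.le_sup (Finset.mem_range.mpr (by omega))
    · rw [hf k (by omega)]
      exact bot_le
  · refine Finset.sup_le fun m hm => ?_
    have hm : m ≤ b - a := Nat.lt_succ_iff.mp (Finset.mem_range.mp hm)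
    let k : Fin (n + 1) := ⟨a + m, by omega⟩
    calc g m = f k := by rw [hfg k (by simp [k]) (by simp [k]; omega)]; simp [k]
      _ ≤ Finset.univ.sup f := Finset.le_sup (Finset.mem_univ k)

namespace Query

variable {X : Type} {d : ℕ} (v u : Fin d → ℝ) (z : List X)

theorem matSem_eq_bot_of_lt (Q : Query X d) {i j : Fin (z.length + 1)} (hji : (j : ℕ) < i) :
    Q.matSem v u z i j = ⊥ := by
  induction Q generalizing i j with
  | pred => simp [matSem, Nat.not_le.mpr hji]
  | pred0 => simp [matSem, Nat.not_le.mpr hji]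
  | and q1 q2 ih1 ih2 => simp [matSem, ih1 hji, ih2 hji]
  | seq q1 q2 ih1 ih2 =>
    refine Finset.sup_eq_bot_iff _ _ |>.mpr fun k _ => ?_
    rcases lt_or_ge (k : ℕ) i with hki | hik
    · simp [ih1 hki]
    · simp [ih2 (lt_of_lt_of_le hji hik)]

theorem matSem_eq_quant_take_drop (Q : Query X d) {i j : Fin (z.length + 1)} (hij : (i : ℕ) ≤ j) :
    Q.matSem v u z i j = Q.quant v u ((z.drop i).take ((j : ℕ) - i)) := by
  induction Q generalizing i j with
  | pred => simp [matSem, quant, hij]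
  | pred0 => simp [matSem, quant, hij]
  | and q1 q2 ih1 ih2 => simp [matSem, quant, ih1 hij, ih2 hij]
  | seq q1 q2 ih1 ih2 =>
    have hjn : (j : ℕ) ≤ z.length := Nat.lt_succ_iff.mp j.isLt
    have hlen : ((z.drop i).take ((j : ℕ) - i)).length = j - i := by simp; omega
    simp only [matSem, quant, hlen]
    refine Fin.sup_univ_eq_sup_range_of_eq_bot hij hjn _ _ (fun k hik hkj => ?_) (fun k hk => ?_)
    · rw [ih1 hik, ih2 hkj, List.take_take_drop_sub z hkj, List.drop_take_drop_sub z hik]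
    · rcases hk with hki | hjk
      · simp [matSem_eq_bot_of_lt v u z q1 hki]
      · simp [matSem_eq_bot_of_lt v u z q2 hjk]

end Query

theorem matSem_eq_quant_general {X : Type} {d : ℕ} (Q : Query X d)
    (v u : Fin d → ℝ) (z : List X) :
    (∀ i j : Fin (z.length + 1), (i : ℕ) ≤ j →
      Q.matSem v u z i j = Q.quant v u ((z.drop i).take ((j : ℕ) - i))) ∧
    Q.quant v u z = Q.matSem v u z 0 (Fin.last z.length) := by
  refine ⟨fun i j => Q.matSem_eq_quant_take_drop v u z, ?_⟩
  rw [Q.matSem_eq_quant_take_drop v u z (Nat.zero_le _)]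
  simp

/-- Each entry of the matrix semantics is the quantitative semantics of the
corresponding subtrajectory; in particular `⟨Q⟩_{v,u}(z) = (⟪Q⟫_{v,u}(z))_{0,n}`. -/
theorem matSem_eq_quant {X : Type} {d : ℕ} (Q : Query X d)
    (v u : Fin d → ℝ) (hu : ∀ i, 0 < u i) (z : List X) :
    (∀ i j : Fin (z.length + 1), (i : ℕ) ≤ j →
      Q.matSem v u z i j = Q.quant v u ((z.drop i).take ((j : ℕ) - i))) ∧
    Q.quant v u z = Q.matSem v u z 0 (Fin.last z.length) :=
  matSem_eq_quant_general Q v u z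
end
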